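/- The function δ ↦ δ·Φ(−δ), where Φ is the standard normal CDF, attains a unique maximum on (0, ∞); in particular it is positive on (0,∞), tends to 0 as δ → 0⁺ and as δ → ∞, and its derivative Φ(−δ) − δφ(δ) (with φ the standard normal density) has exactly one zero in (0, ∞). -/

import Mathlib

/-!
With `f δ = δ Φ(-δ)`, the relations `Φ' = φ` and `φ' t = -t φ t` give
`f' = g := Φ(-δ) - δ φ(δ)` and `g' δ = (δ² - 2) φ δ`. Comparing `δ` with `-t` under
`∫_{-∞}^{-δ} φ` gives the Mills-ratio bound `δ Φ(-δ) ≤ φ δ`, which makes `f` vanish at `∞`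
and `g` negative beyond `1`. As `g 0 = Φ 0 > 0` and `g` decreases on `[0, 1]`, `g` changes
sign exactly once on `(0, ∞)`, from `+` to `-`, and its zero is the unique maximiser of `f`.
-/

open MeasureTheory ProbabilityTheory Set Filter

/-- The standard normal CDF `Φ`. -/
noncomputable def stdNormalCDF (x : ℝ) : ℝ :=
  ((gaussianReal 0 1) (Set.Iic x)).toReal

/-- The standard normal density `φ`. -/
noncomputable def stdNormalPDF (x : ℝ) : ℝ :=
  (2 * Real.pi) ^ (-(1 : ℝ) / 2) * Real.exp (-x ^ 2 / 2)

open Topology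

theorem hasDerivAt_integral_Iic {E : Type*} [NormedAddCommGroup E] [NormedSpace ℝ E]
    [CompleteSpace E] {f : ℝ → E} (hf : Continuous f) (hfi : Integrable f) (x : ℝ) :
    HasDerivAt (fun y => ∫ t in Iic y, f t) (f x) x := by
  have hsplit : ∀ y, ∫ t in Iic y, f t = (∫ t in Iic 0, f t) + ∫ t in (0 : ℝ)..y, f t :=
    fun y => by rw [← intervalIntegral.integral_Iic_sub_Iic hfi.integrableOn hfi.integrableOn,
        add_sub_cancel]
  rw [funext hsplit]
  exact ((hf.integral_hasStrictDerivAt 0 x).hasDerivAt).const_add _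

lemma stdNormalPDF_eq_gaussianPDFReal : stdNormalPDF = gaussianPDFReal 0 1 := by
  funext x
  rw [stdNormalPDF, gaussianPDFReal, NNReal.coe_one, mul_one, sub_zero,
    Real.rpow_def_of_pos (by positivity), Real.sqrt_eq_rpow, ← Real.rpow_neg (by positivity),
    Real.rpow_def_of_pos (by positivity)]
  ring_nf

lemma stdNormalPDF_pos (x : ℝ) : 0 < stdNormalPDF x := by
  rw [stdNormalPDF_eq_gaussianPDFReal]
  exact gaussianPDFReal_pos _ _ _ one_ne_zero

lemma integrable_stdNormalPDF : Integrable stdNormalPDF := by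
  rw [stdNormalPDF_eq_gaussianPDFReal]
  exact integrable_gaussianPDFReal 0 1

lemma continuous_stdNormalPDF : Continuous stdNormalPDF := by
  unfold stdNormalPDF
  fun_prop

lemma stdNormalPDF_neg (x : ℝ) : stdNormalPDF (-x) = stdNormalPDF x := by
  simp [stdNormalPDF]

lemma hasDerivAt_stdNormalPDF (x : ℝ) : HasDerivAt stdNormalPDF (-x * stdNormalPDF x) x := by
  have h := (((hasDerivAt_pow 2 x).neg.div_const 2).exp).const_mul
    ((2 * Real.pi) ^ (-(1 : ℝ) / 2))
  exact h.congr_deriv (by simp only [stdNormalPDF, Pi.neg_apply]; push_cast; ring)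

lemma tendsto_stdNormalPDF_cocompact : Tendsto stdNormalPDF (cocompact ℝ) (𝓝 0) := by
  have h := (tendsto_rpow_abs_mul_exp_neg_mul_sq_cocompact (by norm_num : (0 : ℝ) < 1 / 2)
    0).const_mul ((2 * Real.pi) ^ (-(1 : ℝ) / 2))
  rw [mul_zero] at h
  convert h using 2 with x
  simp only [stdNormalPDF, Real.rpow_zero, one_mul]
  ring_nf

lemma stdNormalCDF_eq_integral (x : ℝ) : stdNormalCDF x = ∫ t in Iic x, stdNormalPDF t := by
  rw [stdNormalCDF, gaussianReal_apply_eq_integral 0 one_ne_zero, ENNReal.toReal_ofReal,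
    stdNormalPDF_eq_gaussianPDFReal]
  exact setIntegral_nonneg measurableSet_Iic fun t _ => gaussianPDFReal_nonneg 0 1 t

lemma stdNormalCDF_pos (x : ℝ) : 0 < stdNormalCDF x := by
  rw [stdNormalCDF_eq_integral, setIntegral_pos_iff_support_of_nonneg_ae
    (ae_of_all _ fun t => (stdNormalPDF_pos t).le) integrable_stdNormalPDF.integrableOn,
    show Function.support stdNormalPDF = univ from
      eq_univ_of_forall fun t => (stdNormalPDF_pos t).ne', univ_inter]
  simp

lemma hasDerivAt_stdNormalCDF (x : ℝ) : HasDerivAt stdNormalCDF (stdNormalPDF x) x := by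
  rw [funext stdNormalCDF_eq_integral]
  exact hasDerivAt_integral_Iic continuous_stdNormalPDF integrable_stdNormalPDF x

lemma hasDerivAt_stdNormalCDF_neg (x : ℝ) :
    HasDerivAt (fun y => stdNormalCDF (-y)) (-stdNormalPDF x) x := by
  simpa [stdNormalPDF_neg, Function.comp_def] using
    (hasDerivAt_stdNormalCDF (-x)).comp x (hasDerivAt_neg x)

lemma integrable_neg_mul_stdNormalPDF : Integrable fun t => -t * stdNormalPDF t := by
  refine ((integrable_mul_exp_neg_mul_sq (by norm_num : (0 : ℝ) < 1 / 2)).const_mul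
    (-(2 * Real.pi) ^ (-(1 : ℝ) / 2))).congr (ae_of_all _ fun t => ?_)
  simp only [stdNormalPDF]
  ring_nf

lemma setIntegral_Iic_neg_mul_stdNormalPDF (a : ℝ) :
    ∫ t in Iic a, -t * stdNormalPDF t = stdNormalPDF a := by
  simpa using integral_Iic_of_hasDerivAt_of_tendsto continuous_stdNormalPDF.continuousWithinAt
    (fun t _ => hasDerivAt_stdNormalPDF t) integrable_neg_mul_stdNormalPDF.integrableOn
    (tendsto_stdNormalPDF_cocompact.mono_left atBot_le_cocompact)

lemma mul_stdNormalCDF_neg_le_stdNormalPDF (δ : ℝ) : δ * stdNormalCDF (-δ) ≤ stdNormalPDF δ :=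
  calc δ * stdNormalCDF (-δ) = ∫ t in Iic (-δ), δ * stdNormalPDF t := by
        rw [stdNormalCDF_eq_integral, integral_const_mul]
    _ ≤ ∫ t in Iic (-δ), -t * stdNormalPDF t :=
        setIntegral_mono_on (integrable_stdNormalPDF.const_mul δ).integrableOn
          integrable_neg_mul_stdNormalPDF.integrableOn measurableSet_Iic fun t ht =>
            mul_le_mul_of_nonneg_right (by linarith [ht.out]) (stdNormalPDF_pos t).le
    _ = stdNormalPDF δ := by rw [setIntegral_Iic_neg_mul_stdNormalPDF, stdNormalPDF_neg]

theorem apply_lt_of_hasDerivAt_sign_change {f f' : ℝ → ℝ} {a c x : ℝ}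
    (hf : ∀ y ∈ Ioi a, HasDerivAt f (f' y) y) (hpos : ∀ y ∈ Ioo a c, 0 < f' y)
    (hneg : ∀ y ∈ Ioi c, f' y < 0) (hx : a < x) (hc : a < c) (hxc : x ≠ c) : f x < f c := by
  have hcont : ContinuousOn f (Ioi a) := fun y hy => (hf y hy).continuousAt.continuousWithinAt
  rcases hxc.lt_or_gt with hlt | hgt
  · refine strictMonoOn_of_deriv_pos (convex_Icc x c) (hcont.mono fun y hy => hx.trans_le hy.1)
      (fun y hy => ?_) ⟨le_rfl, hlt.le⟩ ⟨hlt.le, le_rfl⟩ hlt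
    rw [interior_Icc] at hy
    rw [(hf y (hx.trans hy.1)).deriv]
    exact hpos y ⟨hx.trans hy.1, hy.2⟩
  · refine strictAntiOn_of_deriv_neg (convex_Icc c x) (hcont.mono fun y hy => hc.trans_le hy.1)
      (fun y hy => ?_) ⟨le_rfl, hgt.le⟩ ⟨hgt.le, le_rfl⟩ hgt
    rw [interior_Icc] at hy
    rw [(hf y (hc.trans hy.1)).deriv]
    exact hneg y hy.1

noncomputable def deltaPhi (δ : ℝ) : ℝ := δ * stdNormalCDF (-δ)

noncomputable def deltaPhiDeriv (δ : ℝ) : ℝ := stdNormalCDF (-δ) - δ * stdNormalPDF δ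

lemma hasDerivAt_deltaPhi (δ : ℝ) : HasDerivAt deltaPhi (deltaPhiDeriv δ) δ :=
  ((hasDerivAt_id δ).mul (hasDerivAt_stdNormalCDF_neg δ)).congr_deriv
    (by simp only [deltaPhiDeriv, id]; ring)

lemma continuous_deltaPhi : Continuous deltaPhi :=
  continuous_iff_continuousAt.2 fun δ => (hasDerivAt_deltaPhi δ).continuousAt

lemma tendsto_deltaPhi_nhdsGT_zero : Tendsto deltaPhi (𝓝[>] 0) (𝓝 0) :=
  (continuous_deltaPhi.tendsto' 0 0 (zero_mul _)).mono_left nhdsWithin_le_nhds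

lemma tendsto_deltaPhi_atTop : Tendsto deltaPhi atTop (𝓝 0) :=
  tendsto_of_tendsto_of_tendsto_of_le_of_le' tendsto_const_nhds
    (tendsto_stdNormalPDF_cocompact.mono_left atTop_le_cocompact)
    ((eventually_ge_atTop 0).mono fun δ hδ => mul_nonneg hδ (stdNormalCDF_pos (-δ)).le)
    (Eventually.of_forall mul_stdNormalCDF_neg_le_stdNormalPDF)

lemma hasDerivAt_deltaPhiDeriv (δ : ℝ) :
    HasDerivAt deltaPhiDeriv ((δ ^ 2 - 2) * stdNormalPDF δ) δ :=
  ((hasDerivAt_stdNormalCDF_neg δ).sub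
    ((hasDerivAt_id δ).mul (hasDerivAt_stdNormalPDF δ))).congr_deriv (by simp only [id]; ring)

lemma deltaPhiDeriv_zero_pos : 0 < deltaPhiDeriv 0 := by
  simpa [deltaPhiDeriv] using stdNormalCDF_pos 0

lemma strictAntiOn_deltaPhiDeriv : StrictAntiOn deltaPhiDeriv (Icc 0 1) := by
  refine strictAntiOn_of_deriv_neg (convex_Icc 0 1)
    (fun x _ => (hasDerivAt_deltaPhiDeriv x).continuousAt.continuousWithinAt) fun x hx => ?_
  rw [interior_Icc] at hx
  rw [(hasDerivAt_deltaPhiDeriv x).deriv]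
  exact mul_neg_of_neg_of_pos (by nlinarith [hx.1, hx.2]) (stdNormalPDF_pos x)

lemma mul_deltaPhiDeriv_le (δ : ℝ) : δ * deltaPhiDeriv δ ≤ (1 - δ ^ 2) * stdNormalPDF δ := by
  rw [deltaPhiDeriv]
  linear_combination mul_stdNormalCDF_neg_le_stdNormalPDF δ

lemma deltaPhiDeriv_nonpos_of_one_le {δ : ℝ} (hδ : 1 ≤ δ) : deltaPhiDeriv δ ≤ 0 :=
  nonpos_of_mul_nonpos_right ((mul_deltaPhiDeriv_le δ).trans
    (mul_nonpos_of_nonpos_of_nonneg (by nlinarith) (stdNormalPDF_pos δ).le)) (by linarith)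

lemma deltaPhiDeriv_neg_of_one_lt {δ : ℝ} (hδ : 1 < δ) : deltaPhiDeriv δ < 0 :=
  neg_of_mul_neg_right ((mul_deltaPhiDeriv_le δ).trans_lt
    (mul_neg_of_neg_of_pos (by nlinarith) (stdNormalPDF_pos δ))) (by linarith)

lemma exists_deltaPhiDeriv_sign_change :
    ∃ c > 0, deltaPhiDeriv c = 0 ∧ (∀ x ∈ Ioo 0 c, 0 < deltaPhiDeriv x) ∧
      ∀ x ∈ Ioi c, deltaPhiDeriv x < 0 := by
  obtain ⟨c, hc, hgc⟩ := intermediate_value_Icc' zero_le_one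
    (fun x _ => (hasDerivAt_deltaPhiDeriv x).continuousAt.continuousWithinAt)
    ⟨deltaPhiDeriv_nonpos_of_one_le le_rfl, deltaPhiDeriv_zero_pos.le⟩
  have hc0 : 0 < c := hc.1.lt_of_ne fun h => deltaPhiDeriv_zero_pos.ne' (h ▸ hgc)
  refine ⟨c, hc0, hgc, fun x hx => ?_, fun x hx => ?_⟩
  · exact hgc ▸ strictAntiOn_deltaPhiDeriv ⟨hx.1.le, hx.2.le.trans hc.2⟩ hc hx.2
  · rcases le_or_gt x 1 with hx1 | hx1
    · exact hgc ▸ strictAntiOn_deltaPhiDeriv hc ⟨hc.1.trans hx.out.le, hx1⟩ hx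
    · exact deltaPhiDeriv_neg_of_one_lt hx1

/-- `δ ↦ δ Φ(-δ)` attains a unique maximum on `(0,∞)`; it is positive
on `(0,∞)`, tends to `0` as `δ → 0⁺` and as `δ → ∞`, and its derivative
`Φ(-δ) - δ φ(δ)` has exactly one zero in `(0,∞)`. -/
theorem deltaPhi_unique_max :
    (∀ δ ∈ Ioi (0 : ℝ), 0 < δ * stdNormalCDF (-δ)) ∧
    Tendsto (fun δ : ℝ => δ * stdNormalCDF (-δ)) (nhdsWithin 0 (Ioi (0 : ℝ)))
      (nhds 0) ∧
    Tendsto (fun δ : ℝ => δ * stdNormalCDF (-δ)) atTop (nhds 0) ∧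
    (∀ δ ∈ Ioi (0 : ℝ),
      HasDerivAt (fun δ : ℝ => δ * stdNormalCDF (-δ))
        (stdNormalCDF (-δ) - δ * stdNormalPDF δ) δ) ∧
    (∃! δ : ℝ, δ ∈ Ioi (0 : ℝ) ∧ stdNormalCDF (-δ) - δ * stdNormalPDF δ = 0) ∧
    (∃! δ : ℝ, δ ∈ Ioi (0 : ℝ) ∧
      ∀ x ∈ Ioi (0 : ℝ), x * stdNormalCDF (-x) ≤ δ * stdNormalCDF (-δ)) := by
  obtain ⟨c, hc, hgc, hpos, hneg⟩ := exists_deltaPhiDeriv_sign_change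
  have hmax : ∀ x ∈ Ioi (0 : ℝ), x ≠ c → deltaPhi x < deltaPhi c := fun x hx hxc =>
    apply_lt_of_hasDerivAt_sign_change (fun y _ => hasDerivAt_deltaPhi y) hpos hneg hx hc hxc
  refine ⟨fun δ hδ => mul_pos hδ (stdNormalCDF_pos _), tendsto_deltaPhi_nhdsGT_zero,
    tendsto_deltaPhi_atTop, fun δ _ => hasDerivAt_deltaPhi δ,
    ⟨c, ⟨hc, hgc⟩, fun x ⟨hx, hgx⟩ => ?_⟩, ⟨c, ⟨hc, fun x hx => ?_⟩, fun x ⟨hx, hxmax⟩ => ?_⟩⟩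
  · by_contra hxc
    rcases Ne.lt_or_gt hxc with hlt | hgt
    · exact (hpos x ⟨hx, hlt⟩).ne' hgx
    · exact (hneg x hgt).ne hgx
  · rcases eq_or_ne x c with rfl | hxc
    · exact le_rfl
    · exact (hmax x hx hxc).le
  · by_contra hxc
    exact (hmax x hx hxc).not_ge (hxmax c hc)
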